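/- Let Ω be a compact convex subset of a Banach space. For any Lipschitz curve γ : [a,b] → Ω, any r ≥ 0, and any compact convex subset E ⊆ Ω of diameter r, there exists a Lipschitz curve γ̃ : [a,b] → Ω such that: γ̃ has the same endpoint values as γ (γ̃(a) = γ(a) and γ̃(b) = γ(b)); μ_{γ̃}(E) ≤ r; and μ_{γ̃}(A ∖ E) ≤ μ_γ(A ∖ E) for every Borel set A ⊆ Ω. Consequently μ_{γ̃}(A) ≤ μ_γ(A) + r for every Borel A ⊆ Ω. -/

import Mathlib

open Metric Set MeasureTheory
open scoped ENNReal NNReal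

section CurveInfrastructure

variable {E : Type*} [PseudoMetricSpace E]

theorem evar_Icc_ne_top {K : ℝ≥0} {γ : ℝ → E} (hγ : LipschitzWith K γ) (s t : ℝ) :
    eVariationOn γ (Set.Icc s t) ≠ ⊤ := by
  have h := (hγ.locallyBoundedVariationOn Set.univ) s t (Set.mem_univ s) (Set.mem_univ t)
  simpa [BoundedVariationOn, Set.univ_inter] using h

theorem evar_Icc_le {K : ℝ≥0} {γ : ℝ → E} (hγ : LipschitzWith K γ) {s t : ℝ} (_hst : s ≤ t) :
    eVariationOn γ (Set.Icc s t) ≤ (K : ℝ≥0∞) * ENNReal.ofReal (t - s) := by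
  have h1 : eVariationOn γ (Set.Icc s t) ≤ (K : ℝ≥0∞) * eVariationOn id (Set.Icc s t) := by
    have := hγ.lipschitzOnWith.comp_eVariationOn_le
      (Set.mapsTo_univ (id : ℝ → ℝ) (Set.Icc s t))
    simpa [Function.comp] using this
  have h2 : eVariationOn (id : ℝ → ℝ) (Set.Icc s t) ≤ ENNReal.ofReal (t - s) := by
    have := (monotoneOn_id (s := (Set.univ : Set ℝ))).eVariationOn_le
      (Set.mem_univ s) (Set.mem_univ t)
    simpa [Set.univ_inter] using this
  exact h1.trans (by gcongr)

/-- The (clamped) variation function of the curve `γ` on `[a,b]`: `t ↦` the total variation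
of `γ` on `[a, max a (min t b)]`. -/
noncomputable def curveVar (γ : ℝ → E) (a b t : ℝ) : ℝ :=
  (eVariationOn γ (Set.Icc a (max a (min t b)))).toReal

theorem curveVar_mono {K : ℝ≥0} {γ : ℝ → E} (hγ : LipschitzWith K γ) (a b : ℝ) :
    Monotone (curveVar γ a b) := by
  intro s t hst
  have hc : max a (min s b) ≤ max a (min t b) :=
    max_le_max le_rfl (min_le_min hst le_rfl)
  exact ENNReal.toReal_mono (evar_Icc_ne_top hγ a _)
    (eVariationOn.mono γ (Set.Icc_subset_Icc le_rfl hc))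

theorem curveVar_lipschitzOnIci {K : ℝ≥0} {γ : ℝ → E} (hγ : LipschitzWith K γ) (a : ℝ) :
    LipschitzOnWith K (fun u => (eVariationOn γ (Set.Icc a u)).toReal) (Set.Ici a) := by
  rw [lipschitzOnWith_iff_dist_le_mul]
  intro u hu v hv
  wlog huv : v ≤ u generalizing u v
  · rw [dist_comm, dist_comm u v]
    exact this v hv u hu (le_of_not_ge huv)
  have hfin1 := evar_Icc_ne_top hγ a u
  have hfin2 := evar_Icc_ne_top hγ a v
  have hfin3 := evar_Icc_ne_top hγ v u
  have key : eVariationOn γ (Set.Icc a v) + eVariationOn γ (Set.Icc v u)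
      = eVariationOn γ (Set.Icc a u) := by
    simpa [Set.univ_inter] using
      eVariationOn.Icc_add_Icc γ (s := (Set.univ : Set ℝ)) hv huv (Set.mem_univ v)
  have hsplit : (eVariationOn γ (Set.Icc a u)).toReal
      = (eVariationOn γ (Set.Icc a v)).toReal + (eVariationOn γ (Set.Icc v u)).toReal := by
    rw [← ENNReal.toReal_add hfin2 hfin3, key]
  have hbound : (eVariationOn γ (Set.Icc v u)).toReal ≤ (K : ℝ) * (u - v) := by
    have h := evar_Icc_le hγ huv
    have := ENNReal.toReal_mono (by finiteness) h
    rwa [ENNReal.toReal_mul, ENNReal.coe_toReal, ENNReal.toReal_ofReal (by linarith)] at this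
  have hmono : (eVariationOn γ (Set.Icc a v)).toReal ≤ (eVariationOn γ (Set.Icc a u)).toReal :=
    ENNReal.toReal_mono hfin1 (eVariationOn.mono γ (Set.Icc_subset_Icc le_rfl huv))
  rw [Real.dist_eq, abs_of_nonneg (by linarith), Real.dist_eq, abs_of_nonneg (by linarith)]
  calc (eVariationOn γ (Set.Icc a u)).toReal - (eVariationOn γ (Set.Icc a v)).toReal
      = (eVariationOn γ (Set.Icc v u)).toReal := by rw [hsplit]; ring
    _ ≤ (K : ℝ) * (u - v) := hbound

theorem curveVar_lipschitz {K : ℝ≥0} {γ : ℝ → E} (hγ : LipschitzWith K γ) (a b : ℝ) :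
    LipschitzWith K (curveVar γ a b) := by
  have hclamp : LipschitzWith 1 (fun t : ℝ => max a (min t b)) :=
    (LipschitzWith.id.min_const b).const_max a
  have hmaps : Set.MapsTo (fun t : ℝ => max a (min t b)) Set.univ (Set.Ici a) :=
    fun t _ => Set.mem_Ici.mpr (le_max_left _ _)
  have hcomp := (curveVar_lipschitzOnIci hγ a).comp
    (hclamp.lipschitzOnWith (s := Set.univ)) hmaps
  rw [← lipschitzOnWith_univ]
  simp only [mul_one, lipschitzOnWith_univ] at hcomp ⊢
  exact hcomp

/-- The variation function of a Lipschitz curve on `[a,b]`, as a Stieltjes function. -/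
noncomputable def curveStieltjes (γ : ℝ → E) (K : ℝ≥0) (hγ : LipschitzWith K γ) (a b : ℝ) :
    StieltjesFunction ℝ where
  toFun := curveVar γ a b
  mono' := curveVar_mono hγ a b
  right_continuous' := fun _ =>
    ((curveVar_lipschitz hγ a b).continuous.continuousAt).continuousWithinAt

/-- The length measure `μ_γ` of a Lipschitz curve `γ` restricted to `[a,b]`: the pushforward
under `γ` of the Lebesgue–Stieltjes measure of the variation function of `γ` on `[a,b]`. -/
noncomputable def curveMeasure [MeasurableSpace E] (γ : ℝ → E) (K : ℝ≥0)
    (hγ : LipschitzWith K γ) (a b : ℝ) : Measure E :=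
  Measure.map γ (curveStieltjes γ K hγ a b).measure

/-- The path integral `∫_γ f ds` of a nonnegative Borel function along a Lipschitz curve. -/
noncomputable def pathLIntegral [MeasurableSpace E] (f : E → ℝ) (γ : ℝ → E) (K : ℝ≥0)
    (hγ : LipschitzWith K γ) (a b : ℝ) : ℝ≥0∞ :=
  ∫⁻ x, ENNReal.ofReal (f x) ∂(curveMeasure γ K hγ a b)

end CurveInfrastructure



section AuxGlue

variable {Y : Type*} [PseudoMetricSpace Y]

theorem my_lipschitz_glue {K : ℝ≥0} {f g : ℝ → Y}
    (hf : LipschitzWith K f) (hg : LipschitzWith K g) {c : ℝ} (hc : f c = g c) :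
    LipschitzWith K (fun t => if t ≤ c then f t else g t) := by
  apply LipschitzWith.of_dist_le_mul
  intro s t
  wlog hst : s ≤ t generalizing s t
  · rw [dist_comm, dist_comm s t]; exact this t s (le_of_not_ge hst)
  have hK : (0:ℝ) ≤ (K:ℝ) := K.coe_nonneg
  have hdist : dist s t = t - s := by
    rw [Real.dist_eq, abs_of_nonpos (by linarith)]; ring
  by_cases hs : s ≤ c <;> by_cases ht : t ≤ c
  · simp only [if_pos hs, if_pos ht]; exact hf.dist_le_mul s t
  · simp only [if_pos hs, if_neg ht]
    have h1 := hf.dist_le_mul s c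
    have h2 := hg.dist_le_mul c t
    have h3 := dist_triangle (f s) (g c) (g t)
    rw [← hc] at h3
    have e1 : dist s c = c - s := by
      rw [Real.dist_eq, abs_of_nonpos (by linarith)]; ring
    have e2 : dist c t = t - c := by
      rw [Real.dist_eq, abs_of_nonpos (by linarith)]; ring
    rw [e1] at h1; rw [e2] at h2; rw [hdist]
    calc dist (f s) (g t) ≤ dist (f s) (f c) + dist (f c) (g t) := h3
      _ ≤ (K:ℝ) * (c - s) + (K:ℝ) * (t - c) := add_le_add h1 (hc ▸ h2)
      _ = (K:ℝ) * (t - s) := by ring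
  · exact absurd (hst.trans ht) hs
  · simp only [if_neg hs, if_neg ht]; exact hg.dist_le_mul s t

theorem my_evar_Icc_le_on {L : ℝ≥0} {f : ℝ → Y} {s t : ℝ}
    (h : LipschitzOnWith L f (Set.Icc s t)) (_hst : s ≤ t) :
    eVariationOn f (Set.Icc s t) ≤ (L : ℝ≥0∞) * ENNReal.ofReal (t - s) := by
  have h1 : eVariationOn f (Set.Icc s t) ≤ (L : ℝ≥0∞) * eVariationOn id (Set.Icc s t) := by
    have := h.comp_eVariationOn_le (Set.mapsTo_id (Set.Icc s t))
    simpa [Function.comp] using this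
  have h2 : eVariationOn (id : ℝ → ℝ) (Set.Icc s t) ≤ ENNReal.ofReal (t - s) := by
    have := (monotoneOn_id (s := (Set.univ : Set ℝ))).eVariationOn_le
      (Set.mem_univ s) (Set.mem_univ t)
    simpa [Set.univ_inter] using this
  exact h1.trans (mul_le_mul_right h2 _)

end AuxGlue

section AuxStieltjes

theorem my_restrict_Iic_eq (f g : StieltjesFunction ℝ) {t₀ : ℝ} (h : ∀ t ≤ t₀, f t = g t) :
    f.measure.restrict (Set.Iic t₀) = g.measure.restrict (Set.Iic t₀) := by
  refine MeasureTheory.Measure.ext_of_Ioc' _ _ (fun s t _ => ?_) (fun s t _ => ?_)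
  · rw [Measure.restrict_apply measurableSet_Ioc]
    refine ne_top_of_le_ne_top ?_ (measure_mono Set.inter_subset_left)
    rw [StieltjesFunction.measure_Ioc]; exact ENNReal.ofReal_ne_top
  · rw [Measure.restrict_apply measurableSet_Ioc, Measure.restrict_apply measurableSet_Ioc,
      Set.Ioc_inter_Iic, StieltjesFunction.measure_Ioc,
      StieltjesFunction.measure_Ioc]
    by_cases hs : s ≤ t₀
    · rw [h _ (min_le_right t t₀), h _ hs]
    · have h1 : min t t₀ ≤ s := le_trans (min_le_right _ _) (le_of_not_ge hs)
      rw [ENNReal.ofReal_of_nonpos (by simpa using f.mono h1),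
        ENNReal.ofReal_of_nonpos (by simpa using g.mono h1)]

theorem my_restrict_Ioi_eq (f g : StieltjesFunction ℝ) {t₀ c : ℝ}
    (h : ∀ t, t₀ ≤ t → f t = g t + c) :
    f.measure.restrict (Set.Ioi t₀) = g.measure.restrict (Set.Ioi t₀) := by
  refine MeasureTheory.Measure.ext_of_Ioc' _ _ (fun s t _ => ?_) (fun s t _ => ?_)
  · rw [Measure.restrict_apply measurableSet_Ioc]
    refine ne_top_of_le_ne_top ?_ (measure_mono Set.inter_subset_left)
    rw [StieltjesFunction.measure_Ioc]; exact ENNReal.ofReal_ne_top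
  · rw [Measure.restrict_apply measurableSet_Ioc, Measure.restrict_apply measurableSet_Ioc,
      Set.Ioc_inter_Ioi, StieltjesFunction.measure_Ioc,
      StieltjesFunction.measure_Ioc]
    by_cases ht : t₀ ≤ t
    · rw [h _ ht, h _ (le_max_right s t₀)]; ring_nf
    · have h1 : t ≤ max s t₀ := le_trans (le_of_not_ge ht) (le_max_right _ _)
      rw [ENNReal.ofReal_of_nonpos (by simpa using f.mono h1),
        ENNReal.ofReal_of_nonpos (by simpa using g.mono h1)]

end AuxStieltjes

section AuxCurve

open Filter

variable {Y : Type*} [PseudoMetricSpace Y] {K : ℝ≥0} {γ : ℝ → Y}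

theorem my_curveVar_eq_of_mem (γ : ℝ → Y) {a b t : ℝ} (h1 : a ≤ t) (h2 : t ≤ b) :
    curveVar γ a b t = (eVariationOn γ (Set.Icc a t)).toReal := by
  rw [curveVar, min_eq_left h2, max_eq_right h1]

theorem my_curveVar_of_le (γ : ℝ → Y) {a b t : ℝ} (hab : a ≤ b) (ht : t ≤ a) :
    curveVar γ a b t = 0 := by
  rw [curveVar, min_eq_left (ht.trans hab), max_eq_left ht, Set.Icc_self,
    eVariationOn.subsingleton γ (Set.subsingleton_singleton)]
  rfl

theorem my_curveVar_of_ge (γ : ℝ → Y) {a b t : ℝ} (hab : a ≤ b) (ht : b ≤ t) :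
    curveVar γ a b t = curveVar γ a b b := by
  rw [curveVar, curveVar, min_eq_right ht, min_eq_left le_rfl]

theorem my_curveVar_split (hγ : LipschitzWith K γ) {a b s t : ℝ}
    (has : a ≤ s) (hst : s ≤ t) (htb : t ≤ b) :
    curveVar γ a b t = curveVar γ a b s + (eVariationOn γ (Set.Icc s t)).toReal := by
  rw [my_curveVar_eq_of_mem γ (has.trans hst) htb, my_curveVar_eq_of_mem γ has (hst.trans htb),
    ← ENNReal.toReal_add (evar_Icc_ne_top hγ a s) (evar_Icc_ne_top hγ s t)]
  congr 1
  symm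
  simpa [Set.univ_inter] using
    eVariationOn.Icc_add_Icc γ (s := (Set.univ : Set ℝ)) has hst (Set.mem_univ s)

theorem my_curveStieltjes_apply (hγ : LipschitzWith K γ) (a b t : ℝ) :
    curveStieltjes γ K hγ a b t = curveVar γ a b t := rfl

theorem my_measure_Iic_zero (hγ : LipschitzWith K γ) {a b : ℝ} (hab : a ≤ b) :
    (curveStieltjes γ K hγ a b).measure (Set.Iic a) = 0 := by
  have h0 : ∀ t ≤ a, curveStieltjes γ K hγ a b t = 0 := fun t ht =>
    my_curveVar_of_le γ hab ht
  have htend : Tendsto (curveStieltjes γ K hγ a b) atBot (nhds 0) :=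
    Tendsto.congr' (((eventually_le_atBot a).mono fun t ht => (h0 t ht).symm)) tendsto_const_nhds
  rw [StieltjesFunction.measure_Iic _ htend, h0 a le_rfl]
  simp

theorem my_leftLim_eq (hγ : LipschitzWith K γ) (a b t : ℝ) :
    Function.leftLim (curveStieltjes γ K hγ a b) t = curveStieltjes γ K hγ a b t := by
  apply leftLim_eq_of_tendsto
  exact ((curveVar_lipschitz hγ a b).continuous.tendsto t).mono_left nhdsWithin_le_nhds

theorem my_measure_Ioi_zero (hγ : LipschitzWith K γ) {a b : ℝ} (hab : a ≤ b) :
    (curveStieltjes γ K hγ a b).measure (Set.Ioi b) = 0 := by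
  have h0 : ∀ t, b ≤ t → curveStieltjes γ K hγ a b t = curveVar γ a b b := fun t ht =>
    my_curveVar_of_ge γ hab ht
  have htend : Tendsto (curveStieltjes γ K hγ a b) atTop (nhds (curveVar γ a b b)) :=
    Tendsto.congr' (((eventually_ge_atTop b).mono fun t ht => (h0 t ht).symm)) tendsto_const_nhds
  refine le_antisymm ?_ zero_le
  calc (curveStieltjes γ K hγ a b).measure (Set.Ioi b)
      ≤ (curveStieltjes γ K hγ a b).measure (Set.Ici b) := measure_mono Set.Ioi_subset_Ici_self
    _ = 0 := by
        rw [StieltjesFunction.measure_Ici _ htend, my_leftLim_eq hγ a b, h0 b le_rfl]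
        simp

theorem my_measure_singleton_zero (hγ : LipschitzWith K γ) (a b t : ℝ) :
    (curveStieltjes γ K hγ a b).measure {t} = 0 := by
  rw [StieltjesFunction.measure_singleton, my_leftLim_eq hγ a b]
  simp

theorem my_measure_compl_Icc_zero (hγ : LipschitzWith K γ) {a b : ℝ} (hab : a ≤ b) :
    (curveStieltjes γ K hγ a b).measure (Set.Icc a b)ᶜ = 0 := by
  have hsub : (Set.Icc a b)ᶜ ⊆ Set.Iic a ∪ Set.Ioi b := by
    intro t ht
    simp only [Set.mem_compl_iff, Set.mem_Icc, not_and_or, not_le] at ht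
    rcases ht with h | h
    · exact Or.inl h.le
    · exact Or.inr h
  refine le_antisymm ?_ zero_le
  calc (curveStieltjes γ K hγ a b).measure (Set.Icc a b)ᶜ
      ≤ (curveStieltjes γ K hγ a b).measure (Set.Iic a ∪ Set.Ioi b) := measure_mono hsub
    _ ≤ (curveStieltjes γ K hγ a b).measure (Set.Iic a)
        + (curveStieltjes γ K hγ a b).measure (Set.Ioi b) := measure_union_le _ _
    _ = 0 := by rw [my_measure_Iic_zero hγ hab, my_measure_Ioi_zero hγ hab, add_zero]

end AuxCurve

/-- **Curve modification in a set of small diameter.** Let `Ω` be a compact convex subset of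
a Banach space. For any Lipschitz curve `γ : [a,b] → Ω`, `r ≥ 0`, and compact convex
`E ⊆ Ω` of diameter `r`, there is a Lipschitz curve `γ̃ : [a,b] → Ω` with the same
endpoints such that `μ_γ̃(E) ≤ r` and `μ_γ̃(A ∖ E) ≤ μ_γ(A ∖ E)` for every Borel
`A ⊆ Ω`; consequently `μ_γ̃(A) ≤ μ_γ(A) + r` for every Borel `A ⊆ Ω`. -/
theorem curve_modification_small_diam
    {X : Type*} [NormedAddCommGroup X] [NormedSpace ℝ X] [CompleteSpace X]
    [MeasurableSpace X] [BorelSpace X]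
    (Ω : Set X) (hΩc : IsCompact Ω) (hΩ : Convex ℝ Ω)
    (a b : ℝ) (hab : a ≤ b) (γ : ℝ → X) (K : ℝ≥0) (hγ : LipschitzWith K γ)
    (hγΩ : γ '' Set.Icc a b ⊆ Ω)
    (r : ℝ) (hr : 0 ≤ r) (E : Set X) (hEΩ : E ⊆ Ω) (hEc : IsCompact E)
    (hEconv : Convex ℝ E) (hEdiam : Metric.diam E = r) :
    ∃ (γ' : ℝ → X) (K' : ℝ≥0) (hγ' : LipschitzWith K' γ'),
      γ' '' Set.Icc a b ⊆ Ω ∧ γ' a = γ a ∧ γ' b = γ b ∧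
      curveMeasure γ' K' hγ' a b E ≤ ENNReal.ofReal r ∧
      (∀ A : Set X, A ⊆ Ω → MeasurableSet A →
        curveMeasure γ' K' hγ' a b (A \ E) ≤ curveMeasure γ K hγ a b (A \ E)) ∧
      (∀ A : Set X, A ⊆ Ω → MeasurableSet A →
        curveMeasure γ' K' hγ' a b A ≤ curveMeasure γ K hγ a b A + ENNReal.ofReal r) := by
  have hEm : MeasurableSet E := hEc.isClosed.measurableSet
  -- the third bullet follows from the first two
  have key : ∀ (δ : ℝ → X) (Kδ : ℝ≥0) (hδ : LipschitzWith Kδ δ),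
      curveMeasure δ Kδ hδ a b E ≤ ENNReal.ofReal r →
      (∀ A : Set X, A ⊆ Ω → MeasurableSet A →
        curveMeasure δ Kδ hδ a b (A \ E) ≤ curveMeasure γ K hγ a b (A \ E)) →
      ∀ A : Set X, A ⊆ Ω → MeasurableSet A →
        curveMeasure δ Kδ hδ a b A ≤ curveMeasure γ K hγ a b A + ENNReal.ofReal r := by
    intro δ Kδ hδ h1 h2 A hA hAm
    have hsplit : A ⊆ (A \ E) ∪ (A ∩ E) := by
      intro x hx
      by_cases hxE : x ∈ E
      · exact Or.inr ⟨hx, hxE⟩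
      · exact Or.inl ⟨hx, hxE⟩
    calc curveMeasure δ Kδ hδ a b A
        ≤ curveMeasure δ Kδ hδ a b ((A \ E) ∪ (A ∩ E)) := measure_mono hsplit
      _ ≤ curveMeasure δ Kδ hδ a b (A \ E) + curveMeasure δ Kδ hδ a b (A ∩ E) :=
          measure_union_le _ _
      _ ≤ curveMeasure γ K hγ a b (A \ E) + ENNReal.ofReal r :=
          add_le_add (h2 A hA hAm) ((measure_mono Set.inter_subset_right).trans h1)
      _ ≤ curveMeasure γ K hγ a b A + ENNReal.ofReal r :=
          add_le_add_left (measure_mono Set.diff_subset) _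
  by_cases hS : (γ ⁻¹' E ∩ Set.Icc a b).Nonempty
  · -- main case: the curve meets E within [a,b]
    have hScomp : IsCompact (γ ⁻¹' E ∩ Set.Icc a b) :=
      isCompact_Icc.inter_left (hEc.isClosed.preimage hγ.continuous)
    set t₁ := sInf (γ ⁻¹' E ∩ Set.Icc a b) with ht₁def
    set t₂ := sSup (γ ⁻¹' E ∩ Set.Icc a b) with ht₂def
    have ht₁S : t₁ ∈ γ ⁻¹' E ∩ Set.Icc a b := hScomp.sInf_mem hS
    have ht₂S : t₂ ∈ γ ⁻¹' E ∩ Set.Icc a b := hScomp.sSup_mem hS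
    have ht₁E : γ t₁ ∈ E := ht₁S.1
    have ht₂E : γ t₂ ∈ E := ht₂S.1
    have ht₁a : a ≤ t₁ := ht₁S.2.1
    have ht₁b : t₁ ≤ b := ht₁S.2.2
    have ht₂a : a ≤ t₂ := ht₂S.2.1
    have ht₂b : t₂ ≤ b := ht₂S.2.2
    have h12 : t₁ ≤ t₂ := le_csSup hScomp.bddAbove ht₁S
    have hfirst : ∀ t ∈ Set.Icc a b, t < t₁ → γ t ∉ E := fun t htab hlt htE =>
      absurd (csInf_le hScomp.bddBelow ⟨htE, htab⟩) (not_le.2 hlt)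
    have hlast : ∀ t ∈ Set.Icc a b, t₂ < t → γ t ∉ E := fun t htab hlt htE =>
      absurd (le_csSup hScomp.bddAbove ⟨htE, htab⟩) (not_le.2 hlt)
    set seg : ℝ → X := fun t => γ t₁ + ((t - t₁) / (t₂ - t₁)) • (γ t₂ - γ t₁) with hseg
    have hseg_t₁ : seg t₁ = γ t₁ := by simp [hseg]
    have hseg_t₂ : seg t₂ = γ t₂ := by
      by_cases h : t₁ = t₂
      · simp [hseg, h]
      · have hd : t₂ - t₁ ≠ 0 := sub_ne_zero.2 (Ne.symm h)
        simp only [hseg]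
        rw [div_self hd, one_smul]
        abel
    have hseg_lip : LipschitzWith K seg := by
      by_cases h : t₁ = t₂
      · have hz : t₂ - t₁ = 0 := by rw [h, sub_self]
        have : seg = fun _ => γ t₁ := by
          funext t; simp [hseg, hz]
        rw [this]
        apply LipschitzWith.of_dist_le_mul
        intro x y
        rw [dist_self]
        positivity
      · have hd : 0 < t₂ - t₁ := sub_pos.2 (lt_of_le_of_ne h12 h)
        apply LipschitzWith.of_dist_le_mul
        intro x y
        have hxy : seg x - seg y = ((x - y) / (t₂ - t₁)) • (γ t₂ - γ t₁) := by
          simp only [hseg]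
          rw [add_sub_add_left_eq_sub, ← sub_smul]
          congr 1
          ring
        have hnorm : ‖γ t₂ - γ t₁‖ ≤ (K : ℝ) * (t₂ - t₁) := by
          have h1 := hγ.dist_le_mul t₂ t₁
          rwa [Real.dist_eq, abs_of_nonneg (by linarith), dist_eq_norm] at h1
        calc dist (seg x) (seg y) = ‖seg x - seg y‖ := dist_eq_norm _ _
          _ = (|x - y| / (t₂ - t₁)) * ‖γ t₂ - γ t₁‖ := by
              rw [hxy, norm_smul, Real.norm_eq_abs, abs_div, abs_of_pos hd]
          _ ≤ (|x - y| / (t₂ - t₁)) * ((K : ℝ) * (t₂ - t₁)) := by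
              apply mul_le_mul_of_nonneg_left hnorm (by positivity)
          _ = (K : ℝ) * |x - y| := by field_simp
          _ = (K : ℝ) * dist x y := by rw [Real.dist_eq]
    set γ'L : ℝ → X := fun t => if t ≤ t₁ then γ t else seg t with hγ'Ldef
    set γ' : ℝ → X := fun t => if t ≤ t₂ then γ'L t else γ t with hγ'def
    have hγ'Llip : LipschitzWith K γ'L := my_lipschitz_glue hγ hseg_lip hseg_t₁.symm
    have hglue2 : γ'L t₂ = γ t₂ := by
      by_cases h : t₂ ≤ t₁
      · simp only [hγ'Ldef, if_pos h]
      · simp only [hγ'Ldef, if_neg h]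
        exact hseg_t₂
    have hγ'lip : LipschitzWith K γ' := my_lipschitz_glue hγ'Llip hγ hglue2
    have he1 : ∀ t, t ≤ t₁ → γ' t = γ t := fun t ht => by
      simp only [hγ'def, hγ'Ldef, if_pos (ht.trans h12), if_pos ht]
    have he2 : ∀ t, t₂ ≤ t → γ' t = γ t := fun t ht => by
      by_cases h : t ≤ t₂
      · have heq : t = t₂ := le_antisymm h ht
        rw [heq]
        simp only [hγ'def, if_pos le_rfl]
        exact hglue2
      · simp only [hγ'def, if_neg h]
    have hform : ∀ t, t₁ ≤ t → t ≤ t₂ → γ' t = seg t := by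
      intro t h1 h2
      by_cases h : t ≤ t₁
      · have heq : t = t₁ := le_antisymm h h1
        rw [heq, he1 t₁ le_rfl, hseg_t₁]
      · simp only [hγ'def, hγ'Ldef, if_pos h2, if_neg h]
    have he3 : ∀ t, t₁ ≤ t → t ≤ t₂ → γ' t ∈ E := by
      intro t h1 h2
      rw [hform t h1 h2]
      have hθ0 : 0 ≤ (t - t₁) / (t₂ - t₁) := by
        rcases eq_or_lt_of_le h12 with h | h
        · rw [← h, sub_self, div_zero]
        · exact div_nonneg (by linarith) (by linarith)
      have hθ1 : (t - t₁) / (t₂ - t₁) ≤ 1 := by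
        rcases eq_or_lt_of_le h12 with h | h
        · rw [← h, sub_self, div_zero]; norm_num
        · rw [div_le_one (by linarith)]; linarith
      have hrepr : seg t = (1 - (t - t₁) / (t₂ - t₁)) • γ t₁ + ((t - t₁) / (t₂ - t₁)) • γ t₂ := by
        simp only [hseg]
        rw [smul_sub, sub_smul, one_smul]
        abel
      rw [hrepr]
      exact hEconv ht₁E ht₂E (by linarith) hθ0 (by ring)
    have hAnd : γ' a = γ a := he1 a ht₁a
    have hBnd : γ' b = γ b := he2 b ht₂b
    have himg : γ' '' Set.Icc a b ⊆ Ω := by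
      rintro _ ⟨t, htab, rfl⟩
      rcases le_or_gt t t₁ with h | h
      · rw [he1 t h]; exact hγΩ ⟨t, htab, rfl⟩
      rcases le_or_gt t t₂ with h2 | h2
      · exact hEΩ (he3 t h.le h2)
      · rw [he2 t h2.le]; exact hγΩ ⟨t, htab, rfl⟩
    -- the variation of γ' on [t₁, t₂] is at most r
    have hvar : eVariationOn γ' (Set.Icc t₁ t₂) ≤ ENNReal.ofReal r := by
      rcases eq_or_lt_of_le h12 with h | h
      · rw [← h, Set.Icc_self, eVariationOn.subsingleton γ' Set.subsingleton_singleton]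
        exact zero_le
      · have hd : 0 < t₂ - t₁ := by linarith
        set D := dist (γ t₁) (γ t₂) with hD
        have hD0 : 0 ≤ D := dist_nonneg
        have hlipOn : LipschitzOnWith (Real.toNNReal (D / (t₂ - t₁))) γ' (Set.Icc t₁ t₂) := by
          rw [lipschitzOnWith_iff_dist_le_mul]
          intro x hx y hy
          rw [hform x hx.1 hx.2, hform y hy.1 hy.2]
          have hxy : seg x - seg y = ((x - y) / (t₂ - t₁)) • (γ t₂ - γ t₁) := by
            simp only [hseg]
            rw [add_sub_add_left_eq_sub, ← sub_smul]
            congr 1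
            ring
          rw [dist_eq_norm, hxy, norm_smul, Real.norm_eq_abs, abs_div, abs_of_pos hd,
            Real.coe_toNNReal _ (div_nonneg hD0 hd.le), Real.dist_eq]
          have hnn : ‖γ t₂ - γ t₁‖ = D := by rw [← dist_eq_norm, dist_comm]
          rw [hnn]
          apply le_of_eq
          ring
        refine le_trans (my_evar_Icc_le_on hlipOn h12) ?_
        have hcoe : ((Real.toNNReal (D / (t₂ - t₁)) : ℝ≥0) : ℝ≥0∞)
            = ENNReal.ofReal (D / (t₂ - t₁)) := rfl
        rw [hcoe, ← ENNReal.ofReal_mul (div_nonneg hD0 hd.le),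
          div_mul_cancel₀ _ (ne_of_gt hd)]
        refine ENNReal.ofReal_le_ofReal ?_
        rw [← hEdiam]
        exact Metric.dist_le_diam_of_mem hEc.isBounded ht₁E ht₂E
    -- first measure bound
    have h4 : curveMeasure γ' K hγ'lip a b E ≤ ENNReal.ofReal r := by
      rw [curveMeasure, Measure.map_apply hγ'lip.continuous.measurable hEm]
      have hsub : γ' ⁻¹' E ⊆ Set.Icc t₁ t₂ ∪ (Set.Icc a b)ᶜ := by
        intro t ht
        by_cases htab : t ∈ Set.Icc a b
        · left
          constructor
          · by_contra hlt
            push_neg at hlt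
            exact hfirst t htab hlt (by rw [← he1 t hlt.le]; exact ht)
          · by_contra hlt
            push_neg at hlt
            exact hlast t htab hlt (by rw [← he2 t hlt.le]; exact ht)
        · exact Or.inr htab
      refine le_trans (measure_mono hsub) (le_trans (measure_union_le _ _) ?_)
      rw [my_measure_compl_Icc_zero hγ'lip hab, add_zero]
      have hIcc : Set.Icc t₁ t₂ ⊆ {t₁} ∪ Set.Ioc t₁ t₂ := by
        intro x hx
        rcases eq_or_lt_of_le hx.1 with h | h
        · exact Or.inl (by simp [← h])
        · exact Or.inr ⟨h, hx.2⟩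
      refine le_trans (measure_mono hIcc) (le_trans (measure_union_le _ _) ?_)
      rw [my_measure_singleton_zero hγ'lip a b t₁, zero_add, StieltjesFunction.measure_Ioc,
        my_curveStieltjes_apply, my_curveStieltjes_apply,
        my_curveVar_split hγ'lip ht₁a h12 ht₂b]
      have harith : curveVar γ' a b t₁ + (eVariationOn γ' (Set.Icc t₁ t₂)).toReal
          - curveVar γ' a b t₁ = (eVariationOn γ' (Set.Icc t₁ t₂)).toReal := by ring
      rw [harith]
      exact ENNReal.ofReal_le_ofReal (ENNReal.toReal_le_of_le_ofReal hr hvar)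
    -- second measure bound
    have hP1 : ∀ t ≤ t₁, curveStieltjes γ' K hγ'lip a b t = curveStieltjes γ K hγ a b t := by
      intro t ht
      rw [my_curveStieltjes_apply, my_curveStieltjes_apply]
      simp only [curveVar]
      congr 1
      apply eVariationOn.eq_of_eqOn
      intro x hx
      exact he1 x (le_trans hx.2 (max_le ht₁a (le_trans (min_le_left t b) ht)))
    have hP2 : ∀ t, t₂ ≤ t → curveStieltjes γ' K hγ'lip a b t
        = curveStieltjes γ K hγ a b t + (curveVar γ' a b t₂ - curveVar γ a b t₂) := by
      intro t ht
      set u := max a (min t b) with hu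
      have hu2 : t₂ ≤ u := le_trans (le_min ht ht₂b) (le_max_right a _)
      have hub : u ≤ b := max_le hab (min_le_right t b)
      have hcv : ∀ δ : ℝ → X, curveVar δ a b t = (eVariationOn δ (Set.Icc a u)).toReal := by
        intro δ
        rw [curveVar, ← hu]
      have e' : curveVar γ' a b t
          = curveVar γ' a b t₂ + (eVariationOn γ' (Set.Icc t₂ u)).toReal := by
        rw [hcv γ', ← my_curveVar_eq_of_mem γ' (ht₂a.trans hu2) hub,
          my_curveVar_split hγ'lip ht₂a hu2 hub]
      have e : curveVar γ a b t
          = curveVar γ a b t₂ + (eVariationOn γ (Set.Icc t₂ u)).toReal := by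
        rw [hcv γ, ← my_curveVar_eq_of_mem γ (ht₂a.trans hu2) hub,
          my_curveVar_split hγ ht₂a hu2 hub]
      have heqv : eVariationOn γ' (Set.Icc t₂ u) = eVariationOn γ (Set.Icc t₂ u) :=
        eVariationOn.eq_of_eqOn (fun x hx => he2 x hx.1)
      rw [my_curveStieltjes_apply, my_curveStieltjes_apply, e', e, heqv]
      ring
    have h5 : ∀ A : Set X, A ⊆ Ω → MeasurableSet A →
        curveMeasure γ' K hγ'lip a b (A \ E) ≤ curveMeasure γ K hγ a b (A \ E) := by
      intro A hA hAm
      have hAEm : MeasurableSet (A \ E) := hAm.diff hEm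
      rw [curveMeasure, curveMeasure, Measure.map_apply hγ'lip.continuous.measurable hAEm,
        Measure.map_apply hγ.continuous.measurable hAEm]
      have hS'm : MeasurableSet (γ' ⁻¹' (A \ E)) :=
        hAEm.preimage hγ'lip.continuous.measurable
      have hsub : γ' ⁻¹' (A \ E) ⊆ Set.Iic t₁ ∪ Set.Ioi t₂ := by
        intro t ht
        by_contra hcon
        simp only [Set.mem_union, Set.mem_Iic, Set.mem_Ioi, not_or, not_le, not_lt] at hcon
        exact ht.2 (he3 t hcon.1.le hcon.2)
      have hdecomp : γ' ⁻¹' (A \ E)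
          = (γ' ⁻¹' (A \ E) ∩ Set.Iic t₁) ∪ (γ' ⁻¹' (A \ E) ∩ Set.Ioi t₂) := by
        rw [← Set.inter_union_distrib_left, Set.inter_eq_left.2 hsub]
      have hrIic := my_restrict_Iic_eq (curveStieltjes γ' K hγ'lip a b)
        (curveStieltjes γ K hγ a b) hP1
      have hrIoi := my_restrict_Ioi_eq (curveStieltjes γ' K hγ'lip a b)
        (curveStieltjes γ K hγ a b) hP2
      have hIic : (curveStieltjes γ' K hγ'lip a b).measure (γ' ⁻¹' (A \ E) ∩ Set.Iic t₁)
          = (curveStieltjes γ K hγ a b).measure (γ' ⁻¹' (A \ E) ∩ Set.Iic t₁) := by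
        have h := congrArg (fun μ => μ (γ' ⁻¹' (A \ E))) hrIic
        simpa [Measure.restrict_apply hS'm] using h
      have hIoi : (curveStieltjes γ' K hγ'lip a b).measure (γ' ⁻¹' (A \ E) ∩ Set.Ioi t₂)
          = (curveStieltjes γ K hγ a b).measure (γ' ⁻¹' (A \ E) ∩ Set.Ioi t₂) := by
        have h := congrArg (fun μ => μ (γ' ⁻¹' (A \ E))) hrIoi
        simpa [Measure.restrict_apply hS'm] using h
      have hsub1 : γ' ⁻¹' (A \ E) ∩ Set.Iic t₁ ⊆ γ ⁻¹' (A \ E) := by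
        rintro t ⟨h1, h2⟩
        rw [Set.mem_preimage, ← he1 t h2]
        exact h1
      have hsub2 : γ' ⁻¹' (A \ E) ∩ Set.Ioi t₂ ⊆ γ ⁻¹' (A \ E) := by
        rintro t ⟨h1, h2⟩
        rw [Set.mem_preimage, ← he2 t (le_of_lt h2)]
        exact h1
      have hdisj : Disjoint (γ' ⁻¹' (A \ E) ∩ Set.Iic t₁) (γ' ⁻¹' (A \ E) ∩ Set.Ioi t₂) :=
        (Set.Iic_disjoint_Ioi h12).mono Set.inter_subset_right Set.inter_subset_right
      calc (curveStieltjes γ' K hγ'lip a b).measure (γ' ⁻¹' (A \ E))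
          = (curveStieltjes γ' K hγ'lip a b).measure
            ((γ' ⁻¹' (A \ E) ∩ Set.Iic t₁) ∪ (γ' ⁻¹' (A \ E) ∩ Set.Ioi t₂)) := by
            rw [← hdecomp]
        _ ≤ (curveStieltjes γ' K hγ'lip a b).measure (γ' ⁻¹' (A \ E) ∩ Set.Iic t₁)
            + (curveStieltjes γ' K hγ'lip a b).measure (γ' ⁻¹' (A \ E) ∩ Set.Ioi t₂) :=
            measure_union_le _ _
        _ = (curveStieltjes γ K hγ a b).measure (γ' ⁻¹' (A \ E) ∩ Set.Iic t₁)
            + (curveStieltjes γ K hγ a b).measure (γ' ⁻¹' (A \ E) ∩ Set.Ioi t₂) := by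
            rw [hIic, hIoi]
        _ = (curveStieltjes γ K hγ a b).measure
            ((γ' ⁻¹' (A \ E) ∩ Set.Iic t₁) ∪ (γ' ⁻¹' (A \ E) ∩ Set.Ioi t₂)) :=
            (measure_union hdisj (hS'm.inter measurableSet_Ioi)).symm
        _ ≤ (curveStieltjes γ K hγ a b).measure (γ ⁻¹' (A \ E)) :=
            measure_mono (Set.union_subset hsub1 hsub2)
    exact ⟨γ', K, hγ'lip, himg, hAnd, hBnd, h4, h5, key γ' K hγ'lip h4 h5⟩
  · -- the curve never meets E on [a,b]: take γ' = γ
    have h4 : curveMeasure γ K hγ a b E ≤ ENNReal.ofReal r := by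
      rw [curveMeasure, Measure.map_apply hγ.continuous.measurable hEm]
      have hsub : γ ⁻¹' E ⊆ (Set.Icc a b)ᶜ := fun t ht htab => hS ⟨t, ht, htab⟩
      refine le_trans (measure_mono hsub) ?_
      rw [my_measure_compl_Icc_zero hγ hab]
      exact zero_le
    have h5 : ∀ A : Set X, A ⊆ Ω → MeasurableSet A →
        curveMeasure γ K hγ a b (A \ E) ≤ curveMeasure γ K hγ a b (A \ E) :=
      fun A _ _ => le_rfl
    exact ⟨γ, K, hγ, hγΩ, rfl, rfl, h4, h5, key γ K hγ h4 h5⟩
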